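/- The function R(p) := φ(Φ⁻¹(p))/p is strictly decreasing on the interval (0, 1/2): for all 0 < p₁ < p₂ < 1/2, R(p₂) < R(p₁). -/

import Mathlib

open Real MeasureTheory Set Filter
open scoped ENNReal

/-- Standard Gaussian density. -/
noncomputable def gphi (x : ℝ) : ℝ := (Real.sqrt (2 * Real.pi))⁻¹ * Real.exp (-(x ^ 2) / 2)

/-- Standard Gaussian CDF. -/
noncomputable def Phi (r : ℝ) : ℝ := ∫ x in Set.Iic r, gphi x

/-- Inverse of the standard Gaussian CDF (on (0,1)). -/
noncomputable def PhiInv : ℝ → ℝ := Function.invFun Phi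

lemma sqrt2pi_pos : 0 < Real.sqrt (2 * Real.pi) :=
  Real.sqrt_pos.mpr (by positivity)

lemma gphi_pos (x : ℝ) : 0 < gphi x := by
  unfold gphi
  have := sqrt2pi_pos
  positivity

lemma gphi_eq : gphi = fun x => (Real.sqrt (2 * Real.pi))⁻¹ * Real.exp (-(1/2 : ℝ) * x ^ 2) := by
  funext x
  unfold gphi
  ring_nf

lemma integrable_gphi : Integrable gphi := by
  rw [gphi_eq]
  exact (integrable_exp_neg_mul_sq (by norm_num : (0:ℝ) < 1/2)).const_mul _

lemma integral_gphi : ∫ x, gphi x = 1 := by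
  rw [gphi_eq]
  rw [MeasureTheory.integral_const_mul, integral_gaussian]
  rw [show (Real.pi / (1/2)) = 2 * Real.pi by ring]
  exact inv_mul_cancel₀ (ne_of_gt sqrt2pi_pos)

lemma integral_Ioc_gphi_pos {a b : ℝ} (h : a < b) : 0 < ∫ x in Set.Ioc a b, gphi x := by
  refine (setIntegral_pos_iff_support_of_nonneg_ae ?_ ?_).2 ?_
  · exact Eventually.of_forall fun x => (gphi_pos x).le
  · exact integrable_gphi.integrableOn
  · have hsupp : Function.support gphi = Set.univ :=
      Set.eq_univ_of_forall fun x => (gphi_pos x).ne'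
    rw [hsupp, Set.univ_inter]
    simp [Real.volume_Ioc, h]

lemma Phi_strictMono : StrictMono Phi := by
  intro a b h
  have hdisj : Disjoint (Set.Iic a) (Set.Ioc a b) := Set.Iic_disjoint_Ioc le_rfl
  have hunion : Set.Iic a ∪ Set.Ioc a b = Set.Iic b := Set.Iic_union_Ioc_eq_Iic h.le
  have : Phi b = Phi a + ∫ x in Set.Ioc a b, gphi x := by
    unfold Phi
    rw [← hunion, setIntegral_union hdisj measurableSet_Ioc
      integrable_gphi.integrableOn integrable_gphi.integrableOn]
  rw [this]
  linarith [integral_Ioc_gphi_pos h]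

lemma Phi_continuous : Continuous Phi := by
  have hC : (0:ℝ) ≤ (Real.sqrt (2 * Real.pi))⁻¹ := (inv_pos.mpr sqrt2pi_pos).le
  refine LipschitzWith.continuous (K := ⟨(Real.sqrt (2 * Real.pi))⁻¹, hC⟩)
    (LipschitzWith.of_dist_le_mul fun a b => ?_)
  wlog hab : b ≤ a generalizing a b
  · rw [dist_comm (Phi a), dist_comm a]
    exact this b a (le_of_not_ge hab)
  have key : ∀ x y : ℝ, y ≤ x → Phi x - Phi y ≤ (Real.sqrt (2 * Real.pi))⁻¹ * (x - y) := by
    intro x y hyx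
    have hdisj : Disjoint (Set.Iic y) (Set.Ioc y x) := Set.Iic_disjoint_Ioc le_rfl
    have hunion : Set.Iic y ∪ Set.Ioc y x = Set.Iic x := Set.Iic_union_Ioc_eq_Iic hyx
    have hsplit : Phi x = Phi y + ∫ t in Set.Ioc y x, gphi t := by
      unfold Phi
      rw [← hunion, setIntegral_union hdisj measurableSet_Ioc
        integrable_gphi.integrableOn integrable_gphi.integrableOn]
    have hbound : ‖∫ t in Set.Ioc y x, gphi t‖ ≤
        (Real.sqrt (2 * Real.pi))⁻¹ * (volume (Set.Ioc y x)).toReal := by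
      refine norm_setIntegral_le_of_norm_le_const (f := gphi) ?_ ?_
      · rw [Real.volume_Ioc]; exact ENNReal.ofReal_lt_top
      · intro t _
        rw [Real.norm_eq_abs, abs_of_pos (gphi_pos t)]
        unfold gphi
        have h1 : Real.exp (-(t ^ 2) / 2) ≤ 1 := by
          rw [Real.exp_le_one_iff]
          nlinarith [sq_nonneg t]
        nlinarith [inv_pos.mpr sqrt2pi_pos]
    rw [Real.volume_Ioc, ENNReal.toReal_ofReal (by linarith)] at hbound
    have := le_trans (le_abs_self _) hbound
    rw [hsplit]
    linarith [this]
  have hmono : Phi b ≤ Phi a := by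
    rcases eq_or_lt_of_le hab with h | h
    · rw [h]
    · exact (Phi_strictMono h).le
  rw [Real.dist_eq, Real.dist_eq, abs_of_nonneg (by linarith : (0:ℝ) ≤ Phi a - Phi b),
    abs_of_nonneg (by linarith : (0:ℝ) ≤ a - b)]
  exact key a b hab

lemma Phi_tendsto_atTop : Tendsto Phi atTop (nhds 1) := by
  have h := tendsto_setIntegral_of_monotone (μ := volume)
    (s := fun r : ℝ => Set.Iic r) (f := gphi)
    (fun r => measurableSet_Iic)
    (fun a b hab => Set.Iic_subset_Iic.mpr hab)
    (integrable_gphi.integrableOn)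
  rw [Set.iUnion_Iic, MeasureTheory.setIntegral_univ, integral_gphi] at h
  exact h

lemma Phi_tendsto_seq_atBot : Tendsto (fun n : ℕ => Phi (-(n:ℝ))) atTop (nhds 0) := by
  have h := tendsto_setIntegral_of_antitone (μ := volume)
    (s := fun n : ℕ => Set.Iic (-(n:ℝ))) (f := gphi)
    (fun n => measurableSet_Iic)
    (fun a b hab => Set.Iic_subset_Iic.mpr (by exact_mod_cast neg_le_neg (by exact_mod_cast hab)))
    ⟨0, integrable_gphi.integrableOn⟩
  have hempty : (⋂ n : ℕ, Set.Iic (-(n:ℝ))) = ∅ := by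
    ext x
    simp only [Set.mem_iInter, Set.mem_Iic, Set.mem_empty_iff_false, iff_false, not_forall, not_le]
    obtain ⟨n, hn⟩ := exists_nat_gt (-x)
    exact ⟨n, by linarith⟩
  rw [hempty] at h
  simpa [Phi] using h

lemma Phi_surjOn {p : ℝ} (h0 : 0 < p) (h1 : p < 1) : ∃ x, Phi x = p := by
  obtain ⟨n, hn⟩ := (Phi_tendsto_seq_atBot.eventually_lt_const h0).exists
  obtain ⟨b, hb⟩ := (Phi_tendsto_atTop.eventually_const_lt h1).exists
  set a : ℝ := -(n:ℝ)
  have hab : a ≤ b := le_of_lt (Phi_strictMono.lt_iff_lt.mp (hn.trans hb))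
  have := intermediate_value_Icc hab Phi_continuous.continuousOn
  obtain ⟨x, _, hx⟩ := this ⟨hn.le, hb.le⟩
  exact ⟨x, hx⟩

lemma Phi_PhiInv {p : ℝ} (h0 : 0 < p) (h1 : p < 1) : Phi (PhiInv p) = p :=
  Function.invFun_eq (Phi_surjOn h0 h1)

lemma Phi_repr (x : ℝ) : Phi x = ∫ s in Set.Ioi (0:ℝ), gphi (x - s) := by
  have h1 : (∫ s in Set.Ioi (0:ℝ), gphi (x - s)) = ∫ s in Set.Iic (-(0:ℝ)), gphi (x + s) := by
    rw [← integral_comp_neg_Ioi (f := fun s => gphi (x + s))]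
    simp [sub_eq_add_neg]
  rw [h1]
  rw [neg_zero]
  have h2 : (∫ s in Set.Iic (0:ℝ), gphi (x + s)) =
      ∫ s, (Set.Iic x).indicator gphi (x + s) := by
    rw [← MeasureTheory.integral_indicator measurableSet_Iic]
    congr 1
    funext s
    by_cases hs : s ≤ (0:ℝ)
    · rw [Set.indicator_of_mem (Set.mem_Iic.mpr hs),
        Set.indicator_of_mem (Set.mem_Iic.mpr (by linarith))]
    · rw [Set.indicator_of_notMem (by simpa using hs),
        Set.indicator_of_notMem (by simp; push_neg at hs; linarith)]
  rw [h2, MeasureTheory.integral_add_left_eq_self]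
  rw [MeasureTheory.integral_indicator measurableSet_Iic]
  rfl

lemma Phi_pos (x : ℝ) : 0 < Phi x := by
  have h := integral_Ioc_gphi_pos (show x - 1 < x by linarith)
  have hsub : (∫ t in Set.Ioc (x-1) x, gphi t) ≤ Phi x := by
    unfold Phi
    refine setIntegral_mono_set integrable_gphi.integrableOn
      (Eventually.of_forall fun t => (gphi_pos t).le) ?_
    exact HasSubset.Subset.eventuallyLE Set.Ioc_subset_Iic_self
  linarith

lemma gphi_mul_lt {x₁ x₂ s : ℝ} (hx : x₁ < x₂) (hs : 0 < s) :
    gphi x₂ * gphi (x₁ - s) < gphi x₁ * gphi (x₂ - s) := by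
  have hc := sqrt2pi_pos
  have h1 : gphi x₂ * gphi (x₁ - s) =
      ((Real.sqrt (2 * Real.pi))⁻¹)^2 * Real.exp (-(x₂ ^ 2) / 2 + -((x₁ - s) ^ 2) / 2) := by
    unfold gphi; rw [Real.exp_add]; ring
  have h2 : gphi x₁ * gphi (x₂ - s) =
      ((Real.sqrt (2 * Real.pi))⁻¹)^2 * Real.exp (-(x₁ ^ 2) / 2 + -((x₂ - s) ^ 2) / 2) := by
    unfold gphi; rw [Real.exp_add]; ring
  rw [h1, h2]
  refine mul_lt_mul_of_pos_left ?_ (by positivity)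
  rw [Real.exp_lt_exp]
  nlinarith [mul_pos hs (sub_pos.mpr hx)]

lemma integrable_gphi_sub (x : ℝ) : Integrable (fun s => gphi (x - s)) :=
  integrable_gphi.comp_sub_left x

theorem stmt1 (p₁ p₂ : ℝ) (h1 : 0 < p₁) (h12 : p₁ < p₂) (h2 : p₂ < 1 / 2) :
    gphi (PhiInv p₂) / p₂ < gphi (PhiInv p₁) / p₁ := by
  have hp1 : p₁ < 1 := by linarith
  have hp2 : p₂ < 1 := by linarith
  have hp2pos : 0 < p₂ := lt_trans h1 h12
  set x₁ := PhiInv p₁ with hx₁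
  set x₂ := PhiInv p₂ with hx₂
  have e₁ : Phi x₁ = p₁ := Phi_PhiInv h1 hp1
  have e₂ : Phi x₂ = p₂ := Phi_PhiInv hp2pos hp2
  have hx : x₁ < x₂ := Phi_strictMono.lt_iff_lt.mp (by rw [e₁, e₂]; exact h12)
  rw [div_lt_div_iff₀ hp2pos h1, ← e₁, ← e₂, Phi_repr, Phi_repr,
    ← MeasureTheory.integral_const_mul, ← MeasureTheory.integral_const_mul]
  have hint₁ : IntegrableOn (fun s => gphi x₂ * gphi (x₁ - s)) (Set.Ioi (0:ℝ)) :=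
    ((integrable_gphi_sub x₁).const_mul _).integrableOn
  have hint₂ : IntegrableOn (fun s => gphi x₁ * gphi (x₂ - s)) (Set.Ioi (0:ℝ)) :=
    ((integrable_gphi_sub x₂).const_mul _).integrableOn
  have hintF : IntegrableOn (fun s => gphi x₁ * gphi (x₂ - s) - gphi x₂ * gphi (x₁ - s))
      (Set.Ioi (0:ℝ)) := by exact hint₂.sub hint₁
  have key : 0 < ∫ s in Set.Ioi (0:ℝ),
      (gphi x₁ * gphi (x₂ - s) - gphi x₂ * gphi (x₁ - s)) := by
    refine (setIntegral_pos_iff_support_of_nonneg_ae ?_ hintF).2 ?_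
    · rw [EventuallyLE, ae_restrict_iff' measurableSet_Ioi]
      exact Eventually.of_forall fun s hs => sub_nonneg.mpr (gphi_mul_lt hx hs).le
    · have hsub : Set.Ioi (0:ℝ) ⊆
          Function.support (fun s => gphi x₁ * gphi (x₂ - s) - gphi x₂ * gphi (x₁ - s)) ∩
          Set.Ioi (0:ℝ) :=
        fun s hs => ⟨sub_ne_zero.mpr (ne_of_gt (gphi_mul_lt hx hs)), hs⟩
      have h0 : (0:ℝ≥0∞) < volume (Set.Ioi (0:ℝ)) := by simp [Real.volume_Ioi]
      exact lt_of_lt_of_le h0 (measure_mono hsub)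
  rw [MeasureTheory.integral_sub hint₂ hint₁] at key
  linarith
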